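/- Let n ≥ 1, m ≥ 2, d ≥ 1. Let {ρ_{a|x}} be a family of positive semidefinite d×d matrices whose marginal ρ := Σ_{a=1}^m ρ_{a|x} is the same for every x, and let {Z_i} be a family of positive semidefinite matrices, indexed by i ∈ {1,…,m}^n, satisfying the steering-map relations. Then Σ_i tr(Z_i)·tr(ω^spec_i) ≥ 0; that is, the operator Σ_AB = Σ_i Z_i ⊗ ω^spec_i always has nonnegative trace. -/

import Mathlib

open Matrix Finset
open scoped ComplexOrder

/-- The outcome labeled `m` in 1-based labels: the last element of `Fin m`. -/
def lastIdx {m : ℕ} (hm : 0 < m) : Fin m := ⟨m - 1, by omega⟩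

/-- The steering-map relations for a family of matrices indexed by multi-indices. -/
def SteeringRel {n m dA : ℕ} (Z : (Fin n → Fin m) → Matrix (Fin dA) (Fin dA) ℂ) : Prop :=
  ∀ i j : Fin n → Fin m,
    Z i = (∑ x : Fin n, Z (Function.update j x (i x))) - ((n : ℂ) - 1) • Z j

/-- The special solution `ω^spec` associated with an ensemble `ρ` together with a
common marginal `ρbar`. -/
noncomputable def wspec {n m d : ℕ} (hm : 0 < m)
    (ρ : Fin n → Fin m → Matrix (Fin d) (Fin d) ℂ)
    (ρbar : Matrix (Fin d) (Fin d) ℂ) (i : Fin n → Fin m) :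
    Matrix (Fin d) (Fin d) ℂ :=
  (if ∀ x, i x = lastIdx hm then
      (∑ x : Fin n, ρ x (lastIdx hm)) - ((n : ℂ) - 1) • ρbar
    else 0)
  + ∑ x : Fin n,
      if i x ≠ lastIdx hm ∧ ∀ y, y ≠ x → i y = lastIdx hm then ρ x (i x) else 0

lemma trace_nonneg' {k : ℕ} {A : Matrix (Fin k) (Fin k) ℂ} (h : A.PosSemidef) : 0 ≤ A.trace := by
  rw [Matrix.trace]
  apply Finset.sum_nonneg
  intro i _
  exact h.diag_nonneg

lemma nonneg_of_real_mul {c : ℝ} (hc : 0 < c) {z : ℂ} (h : 0 ≤ (c:ℂ) * z) : 0 ≤ z := by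
  rw [Complex.le_def] at h ⊢
  have hre : ((c:ℂ) * z).re = c * z.re := by simp [Complex.mul_re]
  have him : ((c:ℂ) * z).im = c * z.im := by simp [Complex.mul_im]
  obtain ⟨h1, h2⟩ := h
  rw [hre] at h1; rw [him] at h2
  simp only [Complex.zero_re, Complex.zero_im] at *
  constructor
  · nlinarith
  · rcases mul_eq_zero.mp h2.symm with h | h
    · exact absurd h (ne_of_gt hc)
    · simp [h]

lemma prodsum {n m : ℕ} (f : Fin n → Fin m → ℂ) :
    ∑ i : Fin n → Fin m, ∏ x, f x (i x) = ∏ x, ∑ a, f x a := by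
  rw [Finset.prod_univ_sum, Fintype.piFinset_univ]

lemma prod_peel {n m : ℕ} (x : Fin n) (p : Fin n → Fin m → ℂ) (c : Fin m → ℂ) (i : Fin n → Fin m) :
    (∏ y, p y (i y)) * c (i x) = ∏ y, (if y = x then p y (i y) * c (i x) else p y (i y)) := by
  conv_rhs => rw [← Finset.mul_prod_erase univ _ (Finset.mem_univ x)]
  have h1 : ∏ y ∈ univ.erase x, (if y = x then p y (i y) * c (i x) else p y (i y))
      = ∏ y ∈ univ.erase x, p y (i y) :=
    Finset.prod_congr rfl fun y hy => if_neg (Finset.ne_of_mem_erase hy)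
  rw [h1, if_pos rfl]
  conv_lhs => rw [← Finset.mul_prod_erase univ (fun y => p y (i y)) (Finset.mem_univ x)]
  ring

lemma sum_split_last {m : ℕ} (L : Fin m) (f : Fin m → ℂ) :
    (∑ a, if a ≠ L then f a else 0) = (∑ a, f a) - f L := by
  have h : ∀ a : Fin m, (if a ≠ L then f a else 0) = f a - (if a = L then f a else 0) := by
    intro a; by_cases h : a = L <;> simp [h]
  rw [Finset.sum_congr rfl fun a _ => h a, Finset.sum_sub_distrib,
    Finset.sum_ite_eq' univ L f, if_pos (Finset.mem_univ L)]

/-- for positive semidefinite `ρ_{a|x}` with common marginal and a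
positive semidefinite family `Z` satisfying the steering-map relations, the trace of
`Σ_AB = Σ_i Z_i ⊗ ω^spec_i`, namely `Σ_i tr(Z_i)·tr(ω^spec_i)`, is nonnegative. -/
theorem stmt8 (n m d dA : ℕ) (hn : 1 ≤ n) (hm : 2 ≤ m) (hd : 1 ≤ d) (hdA : 1 ≤ dA)
    (ρ : Fin n → Fin m → Matrix (Fin d) (Fin d) ℂ)
    (hρ : ∀ x a, (ρ x a).PosSemidef)
    (ρbar : Matrix (Fin d) (Fin d) ℂ)
    (hρbar : ∀ x, ∑ a, ρ x a = ρbar)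
    (Z : (Fin n → Fin m) → Matrix (Fin dA) (Fin dA) ℂ)
    (hZ : ∀ i, (Z i).PosSemidef)
    (hZrel : SteeringRel Z) :
    0 ≤ ∑ i : Fin n → Fin m, (Z i).trace * (wspec (by omega) ρ ρbar i).trace := by
  have hm0 : 0 < m := by omega
  set L : Fin m := lastIdx hm0 with hLdef
  set M : Fin n → Fin m := fun _ => L with hMdef
  set e : Fin n → Fin m → (Fin n → Fin m) := fun x a => Function.update M x a with hedef
  set p : Fin n → Fin m → ℂ := fun x a => (ρ x a).trace with hpdef
  set t : ℂ := ρbar.trace with htdef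
  set zt : (Fin n → Fin m) → ℂ := fun i => (Z i).trace with hztdef
  have hpn : ∀ x a, 0 ≤ p x a := fun x a => trace_nonneg' (hρ x a)
  have hztn : ∀ i, 0 ≤ zt i := fun i => trace_nonneg' (hZ i)
  have hsum : ∀ x, ∑ a, p x a = t := by
    intro x
    rw [hpdef, htdef, ← hρbar x, Matrix.trace_sum]
  have heL : ∀ x, e x L = M := by
    intro x
    show Function.update M x (M x) = M
    exact Function.update_eq_self x M
  have hlin : ∀ i, zt i = (∑ x, zt (e x (i x))) - ((n:ℂ)-1) * zt M := by
    intro i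
    have := congrArg Matrix.trace (hZrel i M)
    simpa [Matrix.trace_sub, Matrix.trace_sum, Matrix.trace_smul, smul_eq_mul, hztdef, hedef]
      using this
  set c : ℂ := (n:ℂ) - 1 with hcdef
  set S' : ℂ := (∑ x, ∑ a, p x a * zt (e x a)) - c * t * zt M with hS'def
  -- Step 1: the goal sum equals S'
  have hwt : ∀ i, (wspec hm0 ρ ρbar i).trace
      = (if i = M then (∑ x, p x L) - c * t else 0)
        + ∑ x, (if (i x ≠ L ∧ ∀ y, y ≠ x → i y = L) then p x (i x) else 0) := by
    intro i
    simp only [wspec, Matrix.trace_add, Matrix.trace_sum]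
    congr 1
    · have hiff : (∀ x, i x = lastIdx hm0) ↔ i = M :=
        ⟨fun h => funext h, fun h x => congrFun h x⟩
      rw [apply_ite Matrix.trace, Matrix.trace_zero, if_congr hiff rfl rfl]
      congr 1
      rw [Matrix.trace_sub, Matrix.trace_sum, Matrix.trace_smul, smul_eq_mul]
    · exact Finset.sum_congr rfl fun x _ => by
        rw [apply_ite Matrix.trace, Matrix.trace_zero]
  have hgoal : (∑ i : Fin n → Fin m, (Z i).trace * (wspec hm0 ρ ρbar i).trace) = S' := by
    calc ∑ i : Fin n → Fin m, (Z i).trace * (wspec hm0 ρ ρbar i).trace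
        = ∑ i : Fin n → Fin m,
            ((if i = M then zt i * ((∑ x, p x L) - c * t) else 0)
              + ∑ x, (if (i x ≠ L ∧ ∀ y, y ≠ x → i y = L) then zt i * p x (i x) else 0)) := by
          refine Finset.sum_congr rfl fun i _ => ?_
          rw [hwt i, mul_add, mul_ite, mul_zero, Finset.mul_sum]
          congr 1
          exact Finset.sum_congr rfl fun x _ => by rw [mul_ite, mul_zero]
      _ = zt M * ((∑ x, p x L) - c * t)
            + ∑ x, ∑ i : Fin n → Fin m,
                (if (i x ≠ L ∧ ∀ y, y ≠ x → i y = L) then zt i * p x (i x) else 0) := by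
          rw [Finset.sum_add_distrib, Finset.sum_ite_eq' univ M, if_pos (Finset.mem_univ M),
            Finset.sum_comm]
      _ = zt M * ((∑ x, p x L) - c * t)
            + ∑ x, ((∑ a, zt (e x a) * p x a) - zt M * p x L) := by
          congr 1
          refine Finset.sum_congr rfl fun x _ => ?_
          have key : (∑ i : Fin n → Fin m,
              (if (i x ≠ L ∧ ∀ y, y ≠ x → i y = L) then zt i * p x (i x) else 0))
              = ∑ a, (if a ≠ L then zt (e x a) * p x a else 0) := by
            rw [← Finset.sum_filter, ← Finset.sum_filter]
            refine Finset.sum_nbij' (fun i => i x) (fun a => e x a) ?_ ?_ ?_ ?_ ?_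
            · intro i hi
              rw [Finset.mem_filter] at hi ⊢
              exact ⟨Finset.mem_univ _, hi.2.1⟩
            · intro a ha
              rw [Finset.mem_filter] at ha ⊢
              refine ⟨Finset.mem_univ _, ?_, ?_⟩
              · rw [hedef]; simpa using ha.2
              · intro y hy
                rw [hedef]
                simp [Function.update_of_ne hy, hMdef]
            · intro i hi
              rw [Finset.mem_filter] at hi
              funext y
              by_cases hy : y = x
              · subst hy; simp [hedef]
              · simp [hedef, Function.update_of_ne hy, hMdef, hi.2.2 y hy]
            · intro a _
              simp [hedef]
            · intro i hi
              rw [Finset.mem_filter] at hi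
              have : e x (i x) = i := by
                funext y
                by_cases hy : y = x
                · subst hy; simp [hedef]
                · simp [hedef, Function.update_of_ne hy, hMdef, hi.2.2 y hy]
              rw [this]
          rw [key, sum_split_last L (fun a => zt (e x a) * p x a), heL x]
      _ = S' := by
          rw [hS'def, Finset.sum_sub_distrib, ← Finset.mul_sum]
          have hc : ∀ x : Fin n, ∑ a, zt (e x a) * p x a = ∑ a, p x a * zt (e x a) :=
            fun x => Finset.sum_congr rfl fun a _ => mul_comm _ _
          rw [Finset.sum_congr rfl fun x _ => hc x]
          ring
  rw [hgoal]
  -- Step 2: key identity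
  have hKI : (∑ i : Fin n → Fin m, (∏ x, p x (i x)) * zt i) = t ^ (n - 1) * S' := by
    have h2 : ∀ x : Fin n, (∑ i : Fin n → Fin m, (∏ y, p y (i y)) * zt (e x (i x)))
        = t ^ (n - 1) * ∑ a, p x a * zt (e x a) := by
      intro x
      have hh : ∀ i : Fin n → Fin m, (∏ y, p y (i y)) * zt (e x (i x))
          = ∏ y, (fun y a => if y = x then p y a * zt (e x a) else p y a) y (i y) := by
        intro i
        rw [prod_peel x p (fun a => zt (e x a)) i]
        exact Finset.prod_congr rfl fun y _ => by by_cases hy : y = x <;> simp [hy]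
      rw [Finset.sum_congr rfl fun i _ => hh i,
        prodsum (fun y a => if y = x then p y a * zt (e x a) else p y a)]
      have hval : ∀ y : Fin n, (∑ a, (fun y a => if y = x then p y a * zt (e x a) else p y a) y a)
          = if y = x then ∑ a, p x a * zt (e x a) else t := by
        intro y
        by_cases hy : y = x
        · subst hy; simp
        · simp only [if_neg hy]; exact hsum y
      rw [Finset.prod_congr rfl fun y _ => hval y,
        ← Finset.mul_prod_erase univ _ (Finset.mem_univ x), if_pos rfl]
      have : ∏ y ∈ univ.erase x, (if y = x then ∑ a, p x a * zt (e x a) else t)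
          = t ^ (n - 1) := by
        rw [Finset.prod_congr rfl fun y hy => if_neg (Finset.ne_of_mem_erase hy),
          Finset.prod_const, Finset.card_erase_of_mem (Finset.mem_univ x)]
        simp
      rw [this]; ring
    have h1 : (∑ i : Fin n → Fin m, ∏ x, p x (i x)) = t ^ n := by
      rw [prodsum, Finset.prod_congr rfl fun x _ => hsum x, Finset.prod_const]
      simp
    calc (∑ i : Fin n → Fin m, (∏ x, p x (i x)) * zt i)
        = ∑ i : Fin n → Fin m,
            ((∑ x, (∏ y, p y (i y)) * zt (e x (i x))) - (∏ y, p y (i y)) * (c * zt M)) := by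
          refine Finset.sum_congr rfl fun i _ => ?_
          rw [hlin i, mul_sub, Finset.mul_sum]
          try ring
      _ = (∑ x, ∑ i : Fin n → Fin m, (∏ y, p y (i y)) * zt (e x (i x)))
            - (∑ i : Fin n → Fin m, ∏ y, p y (i y)) * (c * zt M) := by
          rw [Finset.sum_sub_distrib, Finset.sum_comm, Finset.sum_mul]
      _ = (∑ x : Fin n, t ^ (n - 1) * ∑ a, p x a * zt (e x a)) - t ^ n * (c * zt M) := by
          rw [Finset.sum_congr rfl fun x _ => h2 x, h1]
      _ = t ^ (n - 1) * S' := by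
          rw [hS'def, ← Finset.mul_sum]
          have hpow : t ^ n = t ^ (n - 1) * t := by
            conv_lhs => rw [show n = (n - 1) + 1 by omega]
            rw [pow_succ]
          rw [hpow]; ring
  -- Step 3: nonnegativity of the weighted sum
  have hnn : 0 ≤ ∑ i : Fin n → Fin m, (∏ x, p x (i x)) * zt i := by
    refine Finset.sum_nonneg fun i _ => mul_nonneg ?_ (hztn i)
    exact Finset.prod_nonneg fun x _ => hpn x (i x)
  rw [hKI] at hnn
  -- Step 4: conclude
  have x0 : Fin n := ⟨0, by omega⟩
  have htn : 0 ≤ t := by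
    rw [← hsum x0]
    exact Finset.sum_nonneg fun a _ => hpn x0 a
  rw [Complex.le_def] at htn
  obtain ⟨htre, htim⟩ := htn
  simp only [Complex.zero_re, Complex.zero_im] at htre htim
  rcases eq_or_lt_of_le htre with hz | hpos
  · -- t = 0, hence all p x a = 0 hence S' = 0
    have ht0 : t = 0 := Complex.ext hz.symm htim.symm
    have hp0 : ∀ x a, p x a = 0 := by
      intro x a
      have hs := hsum x
      rw [ht0] at hs
      exact (Finset.sum_eq_zero_iff_of_nonneg (fun a _ => hpn x a)).mp hs a (Finset.mem_univ a)
    have : S' = 0 := by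
      rw [hS'def, ht0]
      simp [hp0]
    rw [this]
  · -- t = t.re > 0
    have ht : t = ((t.re : ℝ) : ℂ) := Complex.ext rfl htim.symm
    have hpowpos : (0:ℝ) < t.re ^ (n - 1) := pow_pos hpos _
    refine nonneg_of_real_mul hpowpos ?_
    have hcast : ((t.re ^ (n-1) : ℝ) : ℂ) = t ^ (n-1) := by
      rw [Complex.ofReal_pow, ← ht]
    rw [hcast]
    exact hnn
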